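/- Let t = ⌊n/3⌋. Every Boolean nearest neighbor representation of the threshold function TH_n^t contains at least C(n,t)/C(2t,t) positive prototypes; in particular BNN(TH_n^{⌊n/3⌋}) ≥ C(n,⌊n/3⌋)/C(2⌊n/3⌋,⌊n/3⌋) = 2^{Ω(n)}. -/

import Mathlib

/-!
Read Boolean prototypes as points of the Hamming cube: the squared Euclidean distance between
Boolean points is their Hamming distance. Let `a` have weight `t ≥ 1` and let `b` be a positive
prototype strictly nearer to `a` than every negative one. Deleting a `1` of `a` gives a negative
input, and a prototype disagreeing with `a` there would lose its advantage, so `a ≤ b`.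
Symmetrically the nearest negative prototype `c` of such a deletion `a'` satisfies `c ≤ a'`,
whence `d(a, b) < d(a, c) ≤ 1 + d(a', c) ≤ t` and `|b| = t + d(a, b) < 2t`. So each positive
prototype lies above at most `C(2t, t)` of the `C(n, t)` inputs of weight `t`. Finally
`C(m, t) / C(2t, t) ≥ (3/2)^t` for `m ≥ 3t`, comparing descending factorials factor by factor.
-/


open Finset

noncomputable section

noncomputable instance {n : ℕ} : DecidableEq (EuclideanSpace ℝ (Fin n)) :=
  fun _ _ => Classical.propDecidable _

/-- The embedding of a Boolean value into `ℝ`. -/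
def boolToR (b : Bool) : ℝ := if b then 1 else 0

/-- The embedding of a Boolean vector into Euclidean space `ℝ^n`. -/
def toPoint {n : ℕ} (a : Fin n → Bool) : EuclideanSpace ℝ (Fin n) :=
  WithLp.toLp 2 (fun i => boolToR (a i))

/-- `(P, N)` is a nearest neighbor representation of the Boolean function `f`:
`P` and `N` are disjoint finite sets of points of `ℝ^n` such that for every Boolean
vector `a`, if `f a = 1` then some `b ∈ P` is strictly closer to `a` than every `c ∈ N`,
and if `f a = 0` then some `b ∈ N` is strictly closer to `a` than every `c ∈ P`. -/
def IsNNRep {n : ℕ} (f : (Fin n → Bool) → Bool)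
    (P N : Finset (EuclideanSpace ℝ (Fin n))) : Prop :=
  Disjoint P N ∧
  ∀ a : Fin n → Bool,
    (f a = true → ∃ b ∈ P, ∀ c ∈ N, dist (toPoint a) b < dist (toPoint a) c) ∧
    (f a = false → ∃ b ∈ N, ∀ c ∈ P, dist (toPoint a) b < dist (toPoint a) c)

/-- The nearest neighbor complexity of `f`: the minimum size `|P ∪ N|` of a nearest
neighbor representation `(P, N)` of `f`. -/
def NN {n : ℕ} (f : (Fin n → Bool) → Bool) : ℕ :=
  sInf {m | ∃ P N, IsNNRep f P N ∧ (P ∪ N).card = m}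

/-- A point of `ℝ^n` is Boolean if all of its coordinates are `0` or `1`. -/
def IsBooleanPoint {n : ℕ} (p : EuclideanSpace ℝ (Fin n)) : Prop :=
  ∀ i, p i = 0 ∨ p i = 1

/-- The Boolean nearest neighbor complexity of `f`: the minimum size `|P ∪ N|` of a
nearest neighbor representation of `f` all of whose prototypes are Boolean points. -/
def BNN {n : ℕ} (f : (Fin n → Bool) → Bool) : ℕ :=
  sInf {m | ∃ P N, IsNNRep f P N ∧ (∀ p ∈ P ∪ N, IsBooleanPoint p) ∧ (P ∪ N).card = m}

/-- The weight (number of `1` components) of a Boolean vector. -/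
def wt {n : ℕ} (x : Fin n → Bool) : ℕ := (Finset.univ.filter fun i => x i = true).card

/-- The threshold function `TH_n^t`, with value `1` iff `x₁ + ⋯ + xₙ ≥ t`. -/
def TH (n t : ℕ) (x : Fin n → Bool) : Bool := decide (t ≤ wt x)

section Hamming

variable {ι : Type*} [Fintype ι] [DecidableEq ι] {β : ι → Type*} [∀ i, DecidableEq (β i)]

theorem hammingDist_update_le (a : ∀ i, β i) (i : ι) (v : β i) :
    hammingDist a (Function.update a i v) ≤ 1 := by
  refine (card_le_card fun j hj => ?_).trans (card_singleton i).le
  by_contra hji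
  simp_all [Function.update_of_ne (mem_singleton.not.1 hji)]

theorem hammingDist_update_lt {a b : ∀ i, β i} {i : ι} (hi : a i ≠ b i) :
    hammingDist (Function.update a i (b i)) b < hammingDist a b := by
  have : ({j | Function.update a i (b i) j ≠ b j} : Finset ι) =
      ({j | a j ≠ b j} : Finset ι).erase i := by
    ext j
    by_cases hji : j = i
    · subst hji; simp
    · simp [hji]
  rw [hammingDist, hammingDist, this]
  exact card_erase_lt_of_mem (by simpa using hi)

end Hamming

section HammingRep

variable {ι : Type*} [Fintype ι]

def IsHammingNNRep (f : (ι → Bool) → Bool) (P N : Finset (ι → Bool)) : Prop :=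
  ∀ a, (f a = true → ∃ b ∈ P, ∀ c ∈ N, hammingDist a b < hammingDist a c) ∧
    (f a = false → ∃ b ∈ N, ∀ c ∈ P, hammingDist a b < hammingDist a c)

namespace IsHammingNNRep

variable {f : (ι → Bool) → Bool} {P N : Finset (ι → Bool)}

theorem swap (h : IsHammingNNRep f P N) : IsHammingNNRep (fun a => !f a) N P := fun a =>
  ⟨fun ha => (h a).2 (by simpa using ha), fun ha => (h a).1 (by simpa using ha)⟩

theorem apply_eq_of_flip [DecidableEq ι] (h : IsHammingNNRep f P N) {a b : ι → Bool}
    (hb : b ∈ P) (hab : ∀ c ∈ N, hammingDist a b < hammingDist a c) {i : ι}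
    (hflip : f (Function.update a i (!a i)) = false) : b i = a i := by
  by_contra hne
  rw [← Bool.eq_not_iff.2 hne] at hflip
  obtain ⟨c, hcN, hc⟩ := (h _).2 hflip
  have hb_nearer := hammingDist_update_lt (Ne.symm hne)
  have hc_nearer := hc b hb
  have htriangle := hammingDist_triangle a (Function.update a i (b i)) c
  have hstep := hammingDist_update_le a i (b i)
  have := hab c hcN
  omega

end IsHammingNNRep

end HammingRep

section Weight

variable {n : ℕ}

theorem wt_update_true {a : Fin n → Bool} {i : Fin n} (hi : a i = false) :
    wt (Function.update a i true) = wt a + 1 := by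
  have : univ.filter (fun j => Function.update a i true j = true) =
      insert i (univ.filter fun j => a j = true) := by
    ext j
    by_cases hji : j = i
    · subst hji; simp
    · simp [hji]
  rw [wt, wt, this, card_insert_of_notMem (by simp [hi])]

theorem wt_update_false {a : Fin n → Bool} {i : Fin n} (hi : a i = true) :
    wt (Function.update a i false) + 1 = wt a := by
  have h := wt_update_true (a := Function.update a i false) (i := i) (by simp)
  rwa [Function.update_idem, ← hi, Function.update_eq_self, eq_comm] at h

theorem wt_add_hammingDist_of_le {a b : Fin n → Bool} (hab : a ≤ b) :
    wt a + hammingDist a b = wt b := by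
  have hsub : univ.filter (fun j => a j = true) ⊆ univ.filter (fun j => b j = true) :=
    fun j => by simpa using fun hj => Bool.le_iff_imp.1 (hab j) hj
  have hdiff : univ.filter (fun j => a j ≠ b j) =
      univ.filter (fun j => b j = true) \ univ.filter (fun j => a j = true) := by
    ext j
    simp only [mem_filter, mem_univ, true_and, mem_sdiff]
    have := hab j
    revert this
    cases a j <;> cases b j <;> simp
  rw [wt, wt, hammingDist, hdiff, card_sdiff_of_subset hsub]
  have := card_le_card hsub
  omega

end Weight

namespace IsHammingNNRep

variable {n t : ℕ} {P N : Finset (Fin n → Bool)}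

theorem le_of_threshold (h : IsHammingNNRep (TH n t) P N) {a b : Fin n → Bool}
    (ha : wt a = t) (hb : b ∈ P) (hab : ∀ c ∈ N, hammingDist a b < hammingDist a c) :
    a ≤ b := by
  intro i
  cases hai : a i
  · exact Bool.false_le _
  · have hflip : TH n t (Function.update a i (!a i)) = false := by
      have := wt_update_false hai
      simp only [hai, TH, Bool.not_true, decide_eq_false_iff_not]
      omega
    rw [h.apply_eq_of_flip hb hab hflip, hai]

theorem le_of_threshold_neg (h : IsHammingNNRep (TH n t) P N) {a c : Fin n → Bool}
    (ha : t ≤ wt a + 1) (hc : c ∈ N) (hac : ∀ b ∈ P, hammingDist a c < hammingDist a b) :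
    c ≤ a := by
  intro j
  cases haj : a j
  · have hflip : (!TH n t (Function.update a j (!a j))) = false := by
      simp [haj, TH, wt_update_true haj, ha]
    rw [h.swap.apply_eq_of_flip hc hac hflip, haj]
  · exact Bool.le_true _

theorem wt_lt_of_threshold (h : IsHammingNNRep (TH n t) P N) {a b : Fin n → Bool}
    (ht : 1 ≤ t) (ha : wt a = t) (hb : b ∈ P)
    (hab : ∀ c ∈ N, hammingDist a b < hammingDist a c) : wt b < 2 * t := by
  obtain ⟨i, hi⟩ : ∃ i, a i = true := by
    by_contra! hfalse
    have : wt a = 0 := card_eq_zero.2 (filter_eq_empty_iff.2 (by simpa using hfalse))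
    omega
  set a' := Function.update a i false
  have ha' : wt a' + 1 = wt a := wt_update_false hi
  obtain ⟨c, hcN, hc⟩ := (h a').2 (by simp only [TH, decide_eq_false_iff_not]; omega)
  have hca' := wt_add_hammingDist_of_le (h.le_of_threshold_neg (by omega) hcN hc)
  have htriangle := hammingDist_triangle a a' c
  have hstep : hammingDist a a' ≤ 1 := hammingDist_update_le a i false
  have hwt_b := wt_add_hammingDist_of_le (h.le_of_threshold ha hb hab)
  have := hab c hcN
  rw [hammingDist_comm c a'] at hca'
  omega

end IsHammingNNRep

section Counting

variable {n : ℕ}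

open scoped Classical in
theorem card_filter_wt_eq_and_le (b : Fin n → Bool) (k : ℕ) :
    #(univ.filter fun a => wt a = k ∧ a ≤ b) = (wt b).choose k := by
  rw [wt, ← card_powersetCard]
  refine card_nbij' (fun a => univ.filter fun j => a j = true) (fun s j => decide (j ∈ s))
    ?_ ?_ (fun a _ => by ext; simp) (fun s _ => by ext; simp)
  · intro a ha
    simp only [coe_filter, mem_univ, true_and, Set.mem_ofPred_eq, mem_coe,
      mem_powersetCard] at ha ⊢
    refine ⟨fun j => ?_, ha.1⟩
    simpa using fun hj => Bool.le_iff_imp.1 (ha.2 j) hj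
  · intro s hs
    simp only [mem_coe, mem_powersetCard] at hs
    simp only [mem_coe, mem_filter, mem_univ, true_and]
    simp only [wt]
    refine ⟨by simpa using hs.2, fun j => Bool.le_iff_imp.2 fun hj => ?_⟩
    simpa using hs.1 (by simpa using hj)

theorem card_filter_wt_eq (k : ℕ) :
    #(univ.filter fun a : Fin n → Bool => wt a = k) = n.choose k := by
  have hwt : wt (fun _ : Fin n => true) = n := by simp [wt]
  have hle (a : Fin n → Bool) : a ≤ fun _ => true := fun _ => Bool.le_true _
  simpa [hle, hwt] using card_filter_wt_eq_and_le (fun _ : Fin n => true) k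

open scoped Classical in
theorem choose_le_mul_card_of_forall_exists_le {k m : ℕ} (P : Finset (Fin n → Bool))
    (hP : ∀ a, wt a = k → ∃ b ∈ P, a ≤ b ∧ wt b ≤ m) :
    n.choose k ≤ m.choose k * #P := by
  set P' := P.filter fun b => wt b ≤ m
  have hcover : univ.filter (fun a : Fin n → Bool => wt a = k) ⊆
      P'.biUnion fun b => univ.filter fun a => wt a = k ∧ a ≤ b := by
    intro a ha
    obtain ⟨b, hbP, hab, hb⟩ := hP a (by simpa using ha)
    simp only [mem_filter, mem_univ, true_and] at ha
    exact mem_biUnion.2 ⟨b, mem_filter.2 ⟨hbP, hb⟩, by simp [ha, hab]⟩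
  calc n.choose k = #(univ.filter fun a : Fin n → Bool => wt a = k) :=
        (card_filter_wt_eq k).symm
    _ ≤ ∑ b ∈ P', (wt b).choose k := by
      simpa only [card_filter_wt_eq_and_le] using (card_le_card hcover).trans card_biUnion_le
    _ ≤ ∑ _b ∈ P', m.choose k :=
      sum_le_sum fun b hb => Nat.choose_le_choose k (mem_filter.1 hb).2
    _ ≤ m.choose k * #P := by
      rw [sum_const, smul_eq_mul, mul_comm]
      exact Nat.mul_le_mul_left _ (card_filter_le _ _)

end Counting

section Euclidean

variable {n : ℕ}

theorem toPoint_apply (a : Fin n → Bool) (i : Fin n) : toPoint a i = boolToR (a i) := rfl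

theorem boolToR_injective : Function.Injective boolToR := by
  intro x y
  cases x <;> cases y <;> norm_num [boolToR]

theorem toPoint_injective : Function.Injective (toPoint (n := n)) :=
  fun _ _ h => funext fun i => boolToR_injective (congrArg (· i) h)

theorem isBooleanPoint_toPoint (a : Fin n → Bool) : IsBooleanPoint (toPoint a) := fun i => by
  rw [toPoint_apply]
  cases a i <;> simp [boolToR]

theorem IsBooleanPoint.exists_toPoint_eq {p : EuclideanSpace ℝ (Fin n)}
    (hp : IsBooleanPoint p) : ∃ a, toPoint a = p :=
  ⟨fun i => decide (p i = 1), by ext i; rcases hp i with h | h <;> simp [toPoint, boolToR, h]⟩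

theorem dist_toPoint_sq (a b : Fin n → Bool) :
    dist (toPoint a) (toPoint b) ^ 2 = hammingDist a b := by
  rw [EuclideanSpace.dist_eq, Real.sq_sqrt (by positivity), hammingDist, ← sum_boole]
  refine sum_congr rfl fun i _ => ?_
  rw [toPoint_apply, toPoint_apply, Real.dist_eq]
  cases a i <;> cases b i <;> norm_num [boolToR]

theorem dist_toPoint_lt_dist_toPoint_iff (a b c : Fin n → Bool) :
    dist (toPoint a) (toPoint b) < dist (toPoint a) (toPoint c) ↔
      hammingDist a b < hammingDist a c := by
  rw [← pow_lt_pow_iff_left₀ dist_nonneg dist_nonneg two_ne_zero, dist_toPoint_sq,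
    dist_toPoint_sq, Nat.cast_lt]

theorem card_filter_toPoint_mem_le (P : Finset (EuclideanSpace ℝ (Fin n))) :
    #(univ.filter fun a => toPoint a ∈ P) ≤ #P :=
  card_le_card_of_injOn toPoint (fun a ha => by simpa using ha) toPoint_injective.injOn

theorem exists_hammingDist_lt_of_exists_dist_lt {P N : Finset (EuclideanSpace ℝ (Fin n))}
    (hP : ∀ p ∈ P, IsBooleanPoint p) {a : Fin n → Bool}
    (h : ∃ b ∈ P, ∀ c ∈ N, dist (toPoint a) b < dist (toPoint a) c) :
    ∃ b ∈ univ.filter (fun b => toPoint b ∈ P),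
      ∀ c ∈ univ.filter (fun c => toPoint c ∈ N), hammingDist a b < hammingDist a c := by
  obtain ⟨b, hb, hbN⟩ := h
  obtain ⟨b, rfl⟩ := (hP _ hb).exists_toPoint_eq
  exact ⟨b, by simpa using hb, fun c hc =>
    (dist_toPoint_lt_dist_toPoint_iff a b c).1 (hbN _ (by simpa using hc))⟩

theorem IsNNRep.isHammingNNRep {f : (Fin n → Bool) → Bool}
    {P N : Finset (EuclideanSpace ℝ (Fin n))} (h : IsNNRep f P N)
    (hbool : ∀ p ∈ P ∪ N, IsBooleanPoint p) :
    IsHammingNNRep f (univ.filter fun a => toPoint a ∈ P)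
      (univ.filter fun a => toPoint a ∈ N) :=
  fun a =>
    ⟨fun ha => exists_hammingDist_lt_of_exists_dist_lt
        (fun p hp => hbool p (mem_union_left _ hp)) ((h.2 a).1 ha),
      fun ha => exists_hammingDist_lt_of_exists_dist_lt
        (fun p hp => hbool p (mem_union_right _ hp)) ((h.2 a).2 ha)⟩

/-- The truth table: every input is a prototype of its own class. -/
theorem exists_isNNRep_isBooleanPoint (f : (Fin n → Bool) → Bool) :
    ∃ P N, IsNNRep f P N ∧ ∀ p ∈ P ∪ N, IsBooleanPoint p := by
  let table (v : Bool) := (univ.filter fun a => f a = v).image toPoint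
  have hwitness (a : Fin n → Bool) :
      ∃ b ∈ table (f a), ∀ c ∈ table (!f a), dist (toPoint a) b < dist (toPoint a) c := by
    refine ⟨toPoint a, mem_image_of_mem _ (by simp), fun c hc => ?_⟩
    obtain ⟨a', ha', rfl⟩ := mem_image.1 hc
    rw [dist_self, dist_pos]
    rintro h
    simp [toPoint_injective h] at ha'
  refine ⟨table true, table false, ⟨?_, fun a => ⟨fun ha => ?_, fun ha => ?_⟩⟩, ?_⟩
  · exact (disjoint_image toPoint_injective).2 (disjoint_filter.2 fun a _ h1 h2 => by simp_all)
  · simpa [ha] using hwitness a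
  · simpa [ha] using hwitness a
  · intro p hp
    rcases mem_union.1 hp with hp | hp <;> obtain ⟨a, -, rfl⟩ := mem_image.1 hp <;>
      exact isBooleanPoint_toPoint a

theorem exists_isNNRep_card_eq_BNN (f : (Fin n → Bool) → Bool) :
    ∃ P N, IsNNRep f P N ∧ (∀ p ∈ P ∪ N, IsBooleanPoint p) ∧ #(P ∪ N) = BNN f := by
  obtain ⟨P, N, h, hbool⟩ := exists_isNNRep_isBooleanPoint f
  exact Nat.sInf_mem (s := {m | ∃ P N, IsNNRep f P N ∧ (∀ p ∈ P ∪ N, IsBooleanPoint p) ∧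
    #(P ∪ N) = m}) ⟨_, P, N, h, hbool, rfl⟩

end Euclidean

theorem IsHammingNNRep.choose_le_mul_card_of_threshold {n t : ℕ}
    {P N : Finset (Fin n → Bool)} (h : IsHammingNNRep (TH n t) P N) :
    n.choose t ≤ (2 * t).choose t * #P := by
  rcases Nat.eq_zero_or_pos t with rfl | ht
  · obtain ⟨b, hb, -⟩ := (h fun _ => false).1 (by simp [TH])
    simpa using card_pos.2 ⟨b, hb⟩
  · refine choose_le_mul_card_of_forall_exists_le P fun a ha => ?_
    obtain ⟨b, hb, hab⟩ := (h a).1 (by simp [TH, ha])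
    exact ⟨b, hb, h.le_of_threshold ha hb hab, (h.wt_lt_of_threshold ht ha hb hab).le⟩

theorem IsNNRep.choose_div_choose_le_card_of_threshold {n t : ℕ}
    {P N : Finset (EuclideanSpace ℝ (Fin n))} (h : IsNNRep (TH n t) P N)
    (hbool : ∀ p ∈ P ∪ N, IsBooleanPoint p) :
    (n.choose t : ℝ) / ((2 * t).choose t : ℝ) ≤ (#P : ℝ) := by
  rw [div_le_iff₀ (by exact_mod_cast Nat.choose_pos (by omega)), mul_comm]
  exact_mod_cast (h.isHammingNNRep hbool).choose_le_mul_card_of_threshold.trans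
    (Nat.mul_le_mul_left _ (card_filter_toPoint_mem_le P))

theorem three_pow_mul_descFactorial_le {t m : ℕ} (h : 3 * t ≤ m) (k : ℕ) :
    3 ^ k * (2 * t).descFactorial k ≤ 2 ^ k * m.descFactorial k := by
  induction k with
  | zero => simp
  | succ k ih =>
    rw [Nat.descFactorial_succ, Nat.descFactorial_succ]
    calc 3 ^ (k + 1) * ((2 * t - k) * (2 * t).descFactorial k)
        = (3 * (2 * t - k)) * (3 ^ k * (2 * t).descFactorial k) := by ring
      _ ≤ (2 * (m - k)) * (2 ^ k * m.descFactorial k) := Nat.mul_le_mul (by omega) ih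
      _ = 2 ^ (k + 1) * ((m - k) * m.descFactorial k) := by ring

theorem three_pow_mul_choose_le {t m : ℕ} (h : 3 * t ≤ m) :
    3 ^ t * (2 * t).choose t ≤ 2 ^ t * m.choose t := by
  have := three_pow_mul_descFactorial_le h t
  rw [Nat.descFactorial_eq_factorial_mul_choose, Nat.descFactorial_eq_factorial_mul_choose,
    mul_left_comm, mul_left_comm (2 ^ t)] at this
  exact Nat.le_of_mul_le_mul_left this (Nat.factorial_pos t)

theorem three_halves_pow_le_choose_div_choose (m : ℕ) :
    (3 / 2 : ℝ) ^ (m / 3) ≤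
      (m.choose (m / 3) : ℝ) / ((2 * (m / 3)).choose (m / 3) : ℝ) := by
  rw [le_div_iff₀ (by exact_mod_cast Nat.choose_pos (by omega)), div_pow, div_mul_eq_mul_div,
    div_le_iff₀ (by positivity), mul_comm _ ((2 : ℝ) ^ _)]
  exact_mod_cast three_pow_mul_choose_le (Nat.mul_div_le m 3)

theorem exists_pos_two_rpow_le_choose_div_choose :
    ∃ c : ℝ, 0 < c ∧ ∀ᶠ m : ℕ in Filter.atTop,
      (2 : ℝ) ^ (c * m) ≤ (m.choose (m / 3) : ℝ) / ((2 * (m / 3)).choose (m / 3) : ℝ) := by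
  refine ⟨1 / 12, by norm_num, Filter.eventually_atTop.2 ⟨3, fun m hm => ?_⟩⟩
  refine le_trans ?_ (three_halves_pow_le_choose_div_choose m)
  have hm : (m : ℝ) ≤ 6 * (m / 3 : ℕ) := by exact_mod_cast (by omega : m ≤ 6 * (m / 3))
  calc (2 : ℝ) ^ (1 / 12 * (m : ℝ)) ≤ 2 ^ (((m / 3 : ℕ) : ℝ) / 2) :=
        Real.rpow_le_rpow_of_exponent_le one_le_two (by linarith)
    _ = √2 ^ (m / 3) := by rw [Real.rpow_div_two_eq_sqrt _ zero_le_two, Real.rpow_natCast]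
    _ ≤ (3 / 2) ^ (m / 3) :=
        pow_le_pow_left₀ (Real.sqrt_nonneg _)
          (Real.sqrt_le_iff.2 ⟨by norm_num, by norm_num⟩) _

/-- With `t = ⌊n/3⌋`, every Boolean nearest neighbor representation of
`TH_n^t` contains at least `C(n,t) / C(2t,t)` positive prototypes; in particular
`BNN(TH_n^t) ≥ C(n,t) / C(2t,t)`, and this bound is `2^{Ω(n)}`. -/
theorem BNN_threshold_third (n : ℕ) :
    (∀ P N : Finset (EuclideanSpace ℝ (Fin n)),
      IsNNRep (TH n (n / 3)) P N → (∀ p ∈ P ∪ N, IsBooleanPoint p) →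
      ((n.choose (n / 3) : ℝ) / ((2 * (n / 3)).choose (n / 3) : ℝ) ≤ (P.card : ℝ))) ∧
    ((n.choose (n / 3) : ℝ) / ((2 * (n / 3)).choose (n / 3) : ℝ) ≤ (BNN (TH n (n / 3)) : ℝ)) ∧
    (∃ c : ℝ, 0 < c ∧ ∀ᶠ m : ℕ in Filter.atTop,
      (2 : ℝ) ^ (c * m) ≤ (m.choose (m / 3) : ℝ) / ((2 * (m / 3)).choose (m / 3) : ℝ)) := by
  refine ⟨fun P N h hbool => h.choose_div_choose_le_card_of_threshold hbool, ?_,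
    exists_pos_two_rpow_le_choose_div_choose⟩
  obtain ⟨P, N, h, hbool, hBNN⟩ := exists_isNNRep_card_eq_BNN (TH n (n / 3))
  calc _ ≤ (#P : ℝ) := h.choose_div_choose_le_card_of_threshold hbool
    _ ≤ (BNN (TH n (n / 3)) : ℝ) := by
      rw [← hBNN]
      exact_mod_cast card_le_card subset_union_left
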